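/- Let A be a DFA over the alphabet Bool with finite state set Q, |Q| = n, such that L(A) ⊆ 𝔇. If w ∈ D and w·v ∈ L(A) for some word v, then writing w = ex(x) with ℓ = |x|, one has ℓ^2 + 3 < n, and consequently |w| = 2ℓ^2 + 4ℓ + 10 ≤ 2·(n − 3) + 4·⌊√(n − 3)⌋ + 10. -/

import Mathlib

/-! If `ℓ ^ 2 + 3 ≥ n`, a pumping argument inside the first zero block of `ex x` shows that `A`
also accepts `β(x)·11·0^(ℓ²+3+2d)·β(x)·11·0^(ℓ²+3)·v` for some `d > 0`. That word lies in no
`ex y · v'`: the first factor `11` at an even position forces `y = x`, and then the second `β(x)·11`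
of `ex x` would have to begin inside the zero block, with `00`, which no word `β(x)·11·…` does. -/

/-- The morphism β with β(0)=01, β(1)=10, extended to words. -/
def beta (x : List Bool) : List Bool := x.flatMap (fun b => [b, !b])

/-- The map ex : x ↦ β(x)·11·0^(|x|²+3)·β(x)·11·0^(|x|²+3). -/
def ex (x : List Bool) : List Bool :=
  beta x ++ [true, true] ++ List.replicate (x.length ^ 2 + 3) false ++
  beta x ++ [true, true] ++ List.replicate (x.length ^ 2 + 3) false

/-- D is the image of ex. -/
def D : Set (List Bool) := Set.range ex

/-- 𝔇 is the set of all extensions of words of D. -/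
def Dext : Set (List Bool) := {w | ∃ u ∈ D, ∃ v : List Bool, w = u ++ v}

namespace DFA

variable {α σ : Type*} (A : DFA α σ)

theorem evalFrom_replicate_mul_of_evalFrom_replicate {q : σ} {a : α} {d : ℕ}
    (h : A.evalFrom q (List.replicate d a) = q) (k : ℕ) :
    A.evalFrom q (List.replicate (k * d) a) = q := by
  induction k with
  | zero => simp
  | succ k ih =>
    rw [Nat.succ_mul, ← List.replicate_append_replicate, evalFrom_of_append, ih, h]

theorem exists_pos_forall_replicate_add_mul_mem_accepts [Fintype σ] {p r : List α} {a : α}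
    {m : ℕ} (h : p ++ List.replicate m a ++ r ∈ A.accepts) (hm : Fintype.card σ ≤ m) :
    ∃ d > 0, ∀ k, p ++ List.replicate (m + k * d) a ++ r ∈ A.accepts := by
  set s := A.evalFrom A.start p
  obtain ⟨q, u, b, c, hsplit, -, hb, hu, hb_loop, -⟩ :=
    A.evalFrom_split (s := s) (x := List.replicate m a) (by simpa using hm) rfl
  obtain ⟨hm_eq, hub, -⟩ := List.replicate_eq_append_iff.1 hsplit
  obtain ⟨-, hu_rep, hb_rep⟩ := List.append_eq_replicate_iff.1 hub
  replace hm_eq : m = u.length + (b.length + c.length) := by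
    rw [← hm_eq, List.length_append, Nat.add_assoc]
  refine ⟨b.length, List.length_pos_iff.2 hb, fun k => ?_⟩
  have hexp (j : ℕ) : A.evalFrom s (List.replicate (m + j) a)
      = A.evalFrom (A.evalFrom q (List.replicate j a)) (List.replicate (b.length + c.length) a) := by
    rw [hm_eq, Nat.add_assoc, Nat.add_comm _ j, ← List.replicate_append_replicate,
      ← List.replicate_append_replicate, evalFrom_of_append, evalFrom_of_append, ← hu_rep, hu]
  have hpump : A.evalFrom s (List.replicate (m + k * b.length) a)
      = A.evalFrom s (List.replicate m a) := by
    rw [hexp, evalFrom_replicate_mul_of_evalFrom_replicate A (hb_rep ▸ hb_loop)]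
    simpa using (hexp 0).symm
  rw [mem_accepts, eval, evalFrom_of_append, evalFrom_of_append] at h ⊢
  rwa [hpump]

end DFA

theorem beta_cons (b : Bool) (t : List Bool) : beta (b :: t) = b :: (!b) :: beta t := rfl

theorem length_beta (x : List Bool) : (beta x).length = 2 * x.length := by
  induction x with
  | nil => rfl
  | cons b t ih => simp [beta_cons, ih]; omega

theorem beta_append_true_true_inj {x y r s : List Bool}
    (h : beta x ++ true :: true :: r = beta y ++ true :: true :: s) : x = y ∧ r = s := by
  induction x generalizing y with
  | nil => cases y with
    | nil => simpa [beta] using h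
    | cons c t => cases c <;> simp [beta] at h
  | cons b t ih => cases y with
    | nil => cases b <;> simp [beta] at h
    | cons c t' =>
      simp only [beta_cons, List.cons_append, List.cons.injEq] at h
      obtain ⟨rfl, -, h⟩ := h
      exact (ih h).imp_left (congrArg _)

theorem beta_append_true_true_ne_false_false (x r s : List Bool) :
    beta x ++ true :: true :: r ≠ false :: false :: s := by
  cases x with
  | nil => simp [beta]
  | cons b t => cases b <;> simp [beta]

theorem ex_append (y v : List Bool) :
    ex y ++ v = beta y ++ true :: true :: (List.replicate (y.length ^ 2 + 3) false ++
      (beta y ++ true :: true :: (List.replicate (y.length ^ 2 + 3) false ++ v))) := by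
  simp [ex]

theorem length_ex (x : List Bool) : (ex x).length = 2 * x.length ^ 2 + 4 * x.length + 10 := by
  simp [ex, length_beta]; ring

theorem beta_append_replicate_not_mem_Dext (x r : List Bool) {k : ℕ} (hk : 2 ≤ k) :
    beta x ++ true :: true :: (List.replicate (x.length ^ 2 + 3 + k) false ++ r) ∉ Dext := by
  rintro ⟨_, ⟨y, rfl⟩, v, h⟩
  rw [ex_append] at h
  obtain ⟨rfl, h⟩ := beta_append_true_true_inj h
  obtain ⟨j, rfl⟩ : ∃ j, k = j + 2 := ⟨k - 2, by omega⟩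
  rw [← List.replicate_append_replicate, List.append_assoc, List.append_cancel_left_eq] at h
  exact beta_append_true_true_ne_false_false _ _ _ (by simpa [List.replicate_succ] using h.symm)

/-- Length bound for D-prefixes of words of a language contained in 𝔇. -/
theorem stmt_11 (Q : Type) [Fintype Q] (A : DFA Bool Q) (n : ℕ)
    (hn : n = Fintype.card Q)
    (hL : ∀ w ∈ A.accepts, w ∈ Dext)
    (x : List Bool) (v : List Bool) (hv : ex x ++ v ∈ A.accepts) :
    x.length ^ 2 + 3 < n ∧
      (ex x).length = 2 * x.length ^ 2 + 4 * x.length + 10 ∧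
      (ex x).length ≤ 2 * (n - 3) + 4 * Nat.sqrt (n - 3) + 10 := by
  have hsmall : x.length ^ 2 + 3 < n := by
    by_contra! hle
    obtain ⟨d, hd, hpump⟩ := A.exists_pos_forall_replicate_add_mul_mem_accepts
      (p := beta x ++ [true, true])
      (r := beta x ++ true :: true :: (List.replicate (x.length ^ 2 + 3) false ++ v))
      (by simpa [ex_append] using hv) (hn ▸ hle)
    exact beta_append_replicate_not_mem_Dext x _ (k := 2 * d) (by omega)
      (by simpa [Nat.mul_comm] using hL _ (hpump 2))
  have hsqrt : x.length ≤ Nat.sqrt (n - 3) := Nat.le_sqrt'.2 (by omega)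
  refine ⟨hsmall, length_ex x, ?_⟩
  rw [length_ex]
  omega
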